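/- arXiv:1910.08946 — 2 statements merged into one kernel-verified Lean document; each statement's English description precedes it below -/
import Mathlib

section
/- Let g : (0,∞) → ℝ be convex and differentiable on (0,∞), and let γ : (0,∞) → ℝ be continuous with γ(s) ≠ 0 and γ(s) > −1 for every s > 0. Suppose that for every s > 0 the tangency relation g(s + s·γ(s)) = g(s) + s·γ(s)·g′(s) holds, where g′ denotes the derivative of g. Then g is affine: there exist constants a, b ∈ ℝ such that g(s) = a + b·s for all s > 0. -/
/-!
A convex function lies above each of its tangent lines and below each of its chords. So when
the tangent at `s` meets the graph again at `s + s γ(s) ≠ s`, the chord and the tangent line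
coincide, `g` is affine between the two points, and `g'` is constant strictly between them.
Since the jump point depends continuously on `s`, every `u` near `t` lies strictly between `t`
and its jump point or has `t` strictly between itself and its own jump point, so `g'` is
locally constant, hence constant on the connected set `(0, ∞)`.
-/

open Set Filter Topology

theorem IsPreconnected.apply_eq_of_eventually_eq {X Y : Type*} [TopologicalSpace X] {s : Set X}
    {f : X → Y} (hs : IsPreconnected s) (hf : ∀ x ∈ s, ∀ᶠ y in 𝓝 x, f y = f x)
    {x y : X} (hx : x ∈ s) (hy : y ∈ s) : f x = f y := by
  have : PreconnectedSpace s := isPreconnected_iff_preconnectedSpace.mp hs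
  have : IsLocallyConstant (s.domRestrict f) := (IsLocallyConstant.iff_eventually_eq _).2
    fun z ↦ (continuous_subtype_val.tendsto z).eventually (hf z z.2)
  exact this.apply_eq_of_preconnectedSpace ⟨x, hx⟩ ⟨y, hy⟩

namespace ConvexOn

variable {S : Set ℝ} {g : ℝ → ℝ} {u x y : ℝ}

theorem add_sub_mul_deriv_le (hg : ConvexOn ℝ S g) (hu : u ∈ S) (hx : x ∈ S)
    (hgu : DifferentiableAt ℝ g u) : g u + (x - u) * deriv g u ≤ g x := by
  rcases lt_trichotomy u x with hux | rfl | hxu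
  · have := hg.deriv_le_slope hu hx hux hgu
    rw [slope_def_field, le_div_iff₀ (sub_pos.2 hux)] at this
    linarith
  · simp
  · have := hg.slope_le_deriv hx hu hxu hgu
    rw [slope_def_field, div_le_iff₀ (sub_pos.2 hxu)] at this
    linarith

theorem eqOn_segment_of_tangent (hg : ConvexOn ℝ S g) (hu : u ∈ S) (hy : y ∈ S)
    (hgu : DifferentiableAt ℝ g u) (hgy : g y = g u + (y - u) * deriv g u) :
    EqOn g (fun x ↦ g u + (x - u) * deriv g u) (segment ℝ u y) := by
  rintro _ ⟨a, b, ha, hb, hab, rfl⟩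
  refine le_antisymm ?_ (hg.add_sub_mul_deriv_le hu (hg.1 hu hy ha hb hab) hgu)
  calc g (a • u + b • y) ≤ a • g u + b • g y := hg.2 hu hy ha hb hab
    _ = g u + (a • u + b • y - u) * deriv g u := by
      rw [hgy]; simp only [smul_eq_mul]
      linear_combination (g u - u * deriv g u) * hab

theorem deriv_eq_of_mem_uIoo (hg : ConvexOn ℝ S g) (hu : u ∈ S) (hy : y ∈ S)
    (hgu : DifferentiableAt ℝ g u) (hgy : g y = g u + (y - u) * deriv g u)
    (hx : x ∈ uIoo u y) : deriv g x = deriv g u := by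
  have hline : HasDerivAt (fun x ↦ g u + (x - u) * deriv g u) (deriv g u) x := by
    simpa using (((hasDerivAt_id x).sub_const u).mul_const (deriv g u)).const_add (g u)
  have heq : g =ᶠ[𝓝 x] fun x ↦ g u + (x - u) * deriv g u := by
    filter_upwards [isOpen_Ioo.mem_nhds hx] with z hz
    exact hg.eqOn_segment_of_tangent hu hy hgu hgy
      (segment_eq_uIcc u y ▸ uIoo_subset_uIcc_self hz)
  exact (hline.congr_of_eventuallyEq heq).deriv

end ConvexOn

theorem eventually_eq_of_forall_mem_uIoo {f φ : ℝ → ℝ} {t : ℝ} (hφ : ContinuousAt φ t)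
    (ht : φ t ≠ t) (hf : ∀ᶠ s in 𝓝 t, ∀ x ∈ uIoo s (φ s), f x = f s) :
    ∀ᶠ u in 𝓝 t, f u = f t := by
  rcases ht.lt_or_gt with ht | ht
  · filter_upwards [hf, hφ.eventually (Iio_mem_nhds ht), Ioi_mem_nhds ht] with u hfu hφu hu
    rcases lt_trichotomy u t with h | rfl | h
    · exact hf.self_of_nhds u (mem_uIoo_of_gt hu h)
    · rfl
    · exact (hfu t (mem_uIoo_of_gt hφu h)).symm
  · filter_upwards [hf, hφ.eventually (Ioi_mem_nhds ht), Iio_mem_nhds ht] with u hfu hφu hu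
    rcases lt_trichotomy u t with h | rfl | h
    · exact (hfu t (mem_uIoo_of_lt h hφu)).symm
    · rfl
    · exact hf.self_of_nhds u (mem_uIoo_of_lt h hu)

/-- If `g` is convex and differentiable on `(0,∞)`, `γ` is continuous on
`(0,∞)` with `γ s ≠ 0` and `γ s > -1` for all `s > 0`, and the tangent line of `g` at each
`s > 0` revisits the graph at `s + s·γ s`, then `g` is affine on `(0,∞)`. -/
theorem tangency_at_jump_implies_affine
    (g γ : ℝ → ℝ)
    (hconv : ConvexOn ℝ (Set.Ioi 0) g)
    (hdiff : ∀ s ∈ Set.Ioi (0 : ℝ), DifferentiableAt ℝ g s)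
    (hγcont : ContinuousOn γ (Set.Ioi 0))
    (hγne : ∀ s ∈ Set.Ioi (0 : ℝ), γ s ≠ 0)
    (hγgt : ∀ s ∈ Set.Ioi (0 : ℝ), γ s > -1)
    (htan : ∀ s ∈ Set.Ioi (0 : ℝ),
      g (s + s * γ s) = g s + s * γ s * deriv g s) :
    ∃ a b : ℝ, ∀ s ∈ Set.Ioi (0 : ℝ), g s = a + b * s := by
  have hjump_pos (s : ℝ) (hs : s ∈ Ioi (0 : ℝ)) : s + s * γ s ∈ Ioi (0 : ℝ) := by
    have := hγgt s hs
    simp only [mem_Ioi] at hs ⊢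
    nlinarith
  have hlocal (t : ℝ) (ht : t ∈ Ioi (0 : ℝ)) : ∀ᶠ u in 𝓝 t, deriv g u = deriv g t := by
    refine eventually_eq_of_forall_mem_uIoo (φ := fun s ↦ s + s * γ s) ?_ ?_ ?_
    · exact continuousAt_id.add (continuousAt_id.mul (hγcont.continuousAt (Ioi_mem_nhds ht)))
    · simpa using mul_ne_zero (ne_of_gt ht) (hγne t ht)
    · filter_upwards [Ioi_mem_nhds ht] with s hs x hx
      exact hconv.deriv_eq_of_mem_uIoo hs (hjump_pos s hs) (hdiff s hs)
        (by rw [htan s hs]; ring) hx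
  set b := deriv g 1
  have hb : EqOn (deriv g) (deriv fun s ↦ b * s) (Ioi 0) := fun s hs ↦ by
    simpa using isPreconnected_Ioi.apply_eq_of_eventually_eq hlocal hs (mem_Ioi.2 one_pos)
  obtain ⟨a, ha⟩ := isOpen_Ioi.exists_eq_add_of_deriv_eq isPreconnected_Ioi
    (fun s hs ↦ (hdiff s hs).differentiableWithinAt) (differentiableOn_id.const_mul b) hb
  exact ⟨a, b, fun s hs ↦ by rw [ha hs]; ring⟩
end

section
/- Let g : (0,∞) → ℝ be convex and differentiable on (0,∞), and let γ₁, γ₂ : (0,∞) → ℝ be continuous functions with γ₁(s) ≠ 0, γ₂(s) ≠ 0, γ₁(s) > −1, γ₂(s) > −1, and γ₁(s) ≠ γ₂(s) for every s > 0. Suppose that for every s > 0 the difference quotients of g from s along the two displacements agree: (g(s + s·γ₁(s)) − g(s))/(s·γ₁(s)) = (g(s + s·γ₂(s)) − g(s))/(s·γ₂(s)). Then g is affine: there exist constants a, b ∈ ℝ such that g(s) = a + b·s for all s > 0. -/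
/-!
At a base point `x > 0` the points `x`, `x + x γ₁ x`, `x + x γ₂ x` are distinct, and the
hypothesis says that the chords of `g` from `x` to the other two have the same slope, so the three
points of the graph are collinear. A convex function that meets a line in three points coincides
with it between them. Since `γ₁` is continuous and nonzero, every `s > 0` lies strictly between
some base point `x` and `x + x γ₁ x`, so `g` is affine near every point of `(0,∞)`. Its derivative
is then locally constant, hence constant on the connected set `(0,∞)`.
-/

open Set Filter Topology

namespace ConvexOn

variable {s : Set ℝ} {f : ℝ → ℝ}

theorem eqOn_zero_Icc_of_eq_zero (hf : ConvexOn ℝ s f) {u v w : ℝ} (hu : u ∈ s) (hw : w ∈ s)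
    (huv : u < v) (hvw : v < w) (hfu : f u = 0) (hfv : f v = 0) (hfw : f w = 0) :
    EqOn f 0 (Icc u w) := by
  intro t ht
  have hts : t ∈ s := hf.1.ordConnected.out hu hw ht
  refine le_antisymm ?_ ?_
  · simpa [hfu, hfw] using hf.le_on_segment hu hw (segment_eq_Icc (huv.trans hvw).le ▸ ht)
  · rw [Pi.zero_apply, ← hfv]
    rcases le_or_gt t v with htv | hvt
    · exact hf.le_left_of_right_le'' hts hw htv hvw (hfw.trans hfv.symm).le
    · exact hf.le_right_of_left_le'' hu hts huv hvt.le (hfu.trans hfv.symm).le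

theorem eqOn_zero_uIcc_of_eq_zero (hf : ConvexOn ℝ s f) {u v w : ℝ} (hu : u ∈ s) (hv : v ∈ s)
    (hw : w ∈ s) (huv : u ≠ v) (huw : u ≠ w) (hvw : v ≠ w) (hfu : f u = 0) (hfv : f v = 0)
    (hfw : f w = 0) : EqOn f 0 (uIcc u v) := by
  wlog h : u < v generalizing u v
  · rw [uIcc_comm]
    exact this hv hu huv.symm hvw huw hfv hfu (lt_of_le_of_ne (not_lt.1 h) huv.symm)
  rw [uIcc_of_lt h]
  rcases huw.lt_or_gt with huw | hwu
  · rcases hvw.lt_or_gt with hvw | hwv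
    · exact (hf.eqOn_zero_Icc_of_eq_zero hu hw h hvw hfu hfv hfw).mono
        (Icc_subset_Icc_right hvw.le)
    · exact hf.eqOn_zero_Icc_of_eq_zero hu hv huw hwv hfu hfw hfv
  · exact (hf.eqOn_zero_Icc_of_eq_zero hw hv hwu h hfw hfu hfv).mono (Icc_subset_Icc_left hwu.le)

theorem sub_affine (hf : ConvexOn ℝ s f) (a b : ℝ) : ConvexOn ℝ s fun t => f t - (a + b * t) :=
  hf.sub ⟨hf.1, fun x _ y _ p q _ _ hpq => by
    simp only [smul_eq_mul]; exact le_of_eq (by linear_combination a * hpq)⟩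

theorem eqOn_of_slope_eq (hf : ConvexOn ℝ s f) {x y z : ℝ} (hx : x ∈ s) (hy : y ∈ s) (hz : z ∈ s)
    (hxy : x ≠ y) (hxz : x ≠ z) (hyz : y ≠ z) (h : slope f x y = slope f x z) :
    EqOn f (fun t => f x - slope f x y * x + slope f x y * t) (uIcc x y) := by
  have hline : ∀ t, f t - (f x - slope f x t * x + slope f x t * t) = 0 := fun t => by
    have hsmul := sub_smul_slope f x t
    simp only [smul_eq_mul, vsub_eq_sub] at hsmul
    linear_combination -hsmul
  have hzero := (hf.sub_affine (f x - slope f x y * x) (slope f x y)).eqOn_zero_uIcc_of_eq_zero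
    hx hy hz hxy hxz hyz (by ring) (hline y) (h ▸ hline z)
  exact fun t ht => sub_eq_zero.1 (hzero ht)

end ConvexOn

theorem exists_mem_uIoo_of_continuousAt {α : Type*} [LinearOrder α] [TopologicalSpace α]
    [OrderTopology α] [DenselyOrdered α] [NoMinOrder α] [NoMaxOrder α] {F : α → α} {s : α}
    (hF : ContinuousAt F s) (hs : F s ≠ s) {U : Set α} (hU : U ∈ 𝓝 s) :
    ∃ x ∈ U, s ∈ uIoo x (F x) := by
  rcases hs.lt_or_gt with h | h
  · obtain ⟨x, ⟨hxU, hFx⟩, hsx⟩ := ((eventually_nhdsWithin_of_eventually_nhds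
      (Eventually.and hU (hF.eventually (eventually_lt_nhds h)))).and
      (self_mem_nhdsWithin (s := Ioi s))).exists
    exact ⟨x, hxU, by rw [uIoo_of_gt (hFx.trans hsx)]; exact ⟨hFx, hsx⟩⟩
  · obtain ⟨x, ⟨hxU, hFx⟩, hxs⟩ := ((eventually_nhdsWithin_of_eventually_nhds
      (Eventually.and hU (hF.eventually (eventually_gt_nhds h)))).and
      (self_mem_nhdsWithin (s := Iio s))).exists
    exact ⟨x, hxU, by rw [uIoo_of_lt (hxs.trans hFx)]; exact ⟨hxs, hFx⟩⟩

theorem IsOpen.exists_affine_of_eventuallyEq_affine {f : ℝ → ℝ} {s : Set ℝ} (hs : IsOpen s)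
    (hs' : IsPreconnected s) (hf : ∀ x ∈ s, ∃ a b : ℝ, f =ᶠ[𝓝 x] fun z => a + b * z) :
    ∃ a b : ℝ, ∀ x ∈ s, f x = a + b * x := by
  have hderiv : ∀ x ∈ s, ∃ b, HasDerivAt f b x ∧ HasDerivAt (deriv f) 0 x := by
    intro x hx
    obtain ⟨a, b, h⟩ := hf x hx
    have hline (y : ℝ) : HasDerivAt (fun z => a + b * z) b y := by
      simpa using ((hasDerivAt_id y).const_mul b).const_add a
    refine ⟨b, (hline x).congr_of_eventuallyEq h, (hasDerivAt_const x b).congr_of_eventuallyEq ?_⟩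
    filter_upwards [h.eventuallyEq_nhds] with y hy
    exact hy.deriv_eq.trans (hline y).deriv
  have hdiff : DifferentiableOn ℝ f s := fun x hx =>
    (hderiv x hx).choose_spec.1.differentiableAt.differentiableWithinAt
  obtain ⟨b, hb⟩ := hs.exists_is_const_of_deriv_eq_zero hs'
    (fun x hx => (hderiv x hx).choose_spec.2.differentiableAt.differentiableWithinAt)
    (fun x hx => (hderiv x hx).choose_spec.2.deriv)
  obtain ⟨a, ha⟩ := hs.exists_eq_add_of_deriv_eq hs' hdiff (differentiableOn_id.const_mul b)
    (fun x hx => by simp [hb x hx])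
  exact ⟨a, b, fun x hx => (ha hx).trans (add_comm _ _)⟩

theorem two_jump_sizes_implies_affine_general
    (g γ₁ γ₂ : ℝ → ℝ)
    (hconv : ConvexOn ℝ (Set.Ioi 0) g)
    (hγ₁cont : ContinuousOn γ₁ (Set.Ioi 0))
    (hγ₁ne : ∀ s ∈ Set.Ioi (0 : ℝ), γ₁ s ≠ 0)
    (hγ₂ne : ∀ s ∈ Set.Ioi (0 : ℝ), γ₂ s ≠ 0)
    (hγ₁gt : ∀ s ∈ Set.Ioi (0 : ℝ), γ₁ s > -1)
    (hγ₂gt : ∀ s ∈ Set.Ioi (0 : ℝ), γ₂ s > -1)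
    (hne : ∀ s ∈ Set.Ioi (0 : ℝ), γ₁ s ≠ γ₂ s)
    (hq : ∀ s ∈ Set.Ioi (0 : ℝ),
      (g (s + s * γ₁ s) - g s) / (s * γ₁ s) = (g (s + s * γ₂ s) - g s) / (s * γ₂ s)) :
    ∃ a b : ℝ, ∀ s ∈ Set.Ioi (0 : ℝ), g s = a + b * s := by
  have hjump {x γ : ℝ} (hx : 0 < x) (hγ : γ > -1) : x + x * γ ∈ Ioi 0 := by
    rw [mem_Ioi]; nlinarith
  refine isOpen_Ioi.exists_affine_of_eventuallyEq_affine isPreconnected_Ioi fun s hs => ?_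
  have hF : ContinuousAt (fun x => x + x * γ₁ x) s :=
    continuousAt_id.add (continuousAt_id.mul (hγ₁cont.continuousAt (Ioi_mem_nhds hs)))
  obtain ⟨x, hx : 0 < x, hsx⟩ := exists_mem_uIoo_of_continuousAt hF
    (by simp [(mem_Ioi.1 hs).ne', hγ₁ne s hs]) (Ioi_mem_nhds hs)
  have hslope : slope g x (x + x * γ₁ x) = slope g x (x + x * γ₂ x) := by
    simpa only [slope_def_field, add_sub_cancel_left] using hq x hx
  have hEq := hconv.eqOn_of_slope_eq hx (hjump hx (hγ₁gt x hx)) (hjump hx (hγ₂gt x hx))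
    (by simp [hx.ne', hγ₁ne x hx]) (by simp [hx.ne', hγ₂ne x hx])
    (by simp [hx.ne', hne x hx]) hslope
  exact ⟨_, _, eventuallyEq_of_mem (isOpen_Ioo.mem_nhds hsx) (hEq.mono Ioo_subset_Icc_self)⟩

/-- If `g` is convex and differentiable on `(0,∞)`, the continuous functions
`γ₁, γ₂` are nonzero, `> -1`, and pointwise distinct on `(0,∞)`, and the difference
quotients of `g` from every `s > 0` along the two displacements `s·γ₁ s` and `s·γ₂ s`
agree, then `g` is affine on `(0,∞)`. -/
theorem two_jump_sizes_implies_affine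
    (g γ₁ γ₂ : ℝ → ℝ)
    (hconv : ConvexOn ℝ (Set.Ioi 0) g)
    (hdiff : ∀ s ∈ Set.Ioi (0 : ℝ), DifferentiableAt ℝ g s)
    (hγ₁cont : ContinuousOn γ₁ (Set.Ioi 0))
    (hγ₂cont : ContinuousOn γ₂ (Set.Ioi 0))
    (hγ₁ne : ∀ s ∈ Set.Ioi (0 : ℝ), γ₁ s ≠ 0)
    (hγ₂ne : ∀ s ∈ Set.Ioi (0 : ℝ), γ₂ s ≠ 0)
    (hγ₁gt : ∀ s ∈ Set.Ioi (0 : ℝ), γ₁ s > -1)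
    (hγ₂gt : ∀ s ∈ Set.Ioi (0 : ℝ), γ₂ s > -1)
    (hne : ∀ s ∈ Set.Ioi (0 : ℝ), γ₁ s ≠ γ₂ s)
    (hq : ∀ s ∈ Set.Ioi (0 : ℝ),
      (g (s + s * γ₁ s) - g s) / (s * γ₁ s) = (g (s + s * γ₂ s) - g s) / (s * γ₂ s)) :
    ∃ a b : ℝ, ∀ s ∈ Set.Ioi (0 : ℝ), g s = a + b * s :=
  two_jump_sizes_implies_affine_general g γ₁ γ₂ hconv hγ₁cont hγ₁ne hγ₂ne hγ₁gt hγ₂gt hne hq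
end
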